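/- In the three-valued semantics over strict timed traces, metric release satisfies: m(k, φ R_{[0,n]} ψ) = min{ m(k,ψ), max{ m(k,φ), min over x ∈ [1,n] of m(k, ◯̂_{[x,x]}(φ R_{[0,n−x]} ψ)) } } for all k < λ and n ≥ 0, where the empty min (n = 0) is 2. -/
import Mathlib


open scoped Classical ENat

/-- Interval `[a, b]` with `a : ℕ` and `b : ℕ∞` (possibly `ω = ⊤`). -/
abbrev Ivl : Type := ℕ × ℕ∞

/-- Membership `x ∈ [a, b]`. -/
def memI (I : Ivl) (x : ℕ) : Prop := I.1 ≤ x ∧ (x : ℕ∞) ≤ I.2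

/-- Metric temporal formulas over alphabet `A`.  Non-metric operators are the
metric ones with interval `(0, ⊤)`, i.e. `[0, ω]`. -/
inductive MF (A : Type) : Type
  | bot
  | atom (a : A)
  | and (φ ψ : MF A)
  | or (φ ψ : MF A)
  | imp (φ ψ : MF A)
  | prev (I : Ivl) (φ : MF A)      -- ●_I
  | wprev (I : Ivl) (φ : MF A)     -- ●̂_I (weak previous)
  | next (I : Ivl) (φ : MF A)      -- ○_I
  | wnext (I : Ivl) (φ : MF A)     -- ◯̂_I (weak next)
  | since (I : Ivl) (φ ψ : MF A)   -- φ S_I ψ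
  | trigger (I : Ivl) (φ ψ : MF A) -- φ T_I ψ
  | until_ (I : Ivl) (φ ψ : MF A)  -- φ U_I ψ
  | release (I : Ivl) (φ ψ : MF A) -- φ R_I ψ

namespace MF
def top {A : Type} : MF A := imp bot bot
def neg {A : Type} (φ : MF A) : MF A := imp φ bot
/-- `□ φ := ⊥ R_{[0,ω]} φ`. -/
def always {A : Type} (φ : MF A) : MF A := release (0, ⊤) bot φ
/-- `◇ φ := ⊤ U_{[0,ω]} φ`. -/
def evtl {A : Type} (φ : MF A) : MF A := until_ (0, ⊤) top φ
/-- `F := ¬ ○_{[0,ω]} ⊤` (final). -/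
def final {A : Type} : MF A := neg (next (0, ⊤) top)
/-- `I := ¬ ●_{[0,ω]} ⊤` (initial). -/
def initial {A : Type} : MF A := neg (prev (0, ⊤) top)
end MF

/-- Timed HT-trace of length `lam ∈ ℕ ∪ {ω}` over alphabet `A`. -/
structure TimedTrace (A : Type) where
  lam : ℕ∞
  H : ℕ → Set A
  T : ℕ → Set A
  tau : ℕ → ℕ
  sub : ∀ i : ℕ, (i : ℕ∞) < lam → H i ⊆ T i
  mono : ∀ i : ℕ, ((i + 1 : ℕ) : ℕ∞) < lam → tau i ≤ tau (i + 1)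
  zero : tau 0 = 0

/-- Strictness: `τ(i) < τ(i+1)` for all consecutive indices in the domain. -/
def TimedTrace.strict {A : Type} (M : TimedTrace A) : Prop :=
  ∀ i : ℕ, ((i + 1 : ℕ) : ℕ∞) < M.lam → M.tau i < M.tau (i + 1)

/-- The total trace `(T, T)` associated with `(H, T)`. -/
def TimedTrace.tot {A : Type} (M : TimedTrace A) : TimedTrace A :=
  { M with H := M.T, sub := fun _ _ => subset_rfl }

/-- MHT satisfaction `M, k ⊨ φ`. -/
def sat {A : Type} : TimedTrace A → ℕ → MF A → Prop
  | _, _, .bot => False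
  | M, k, .atom a => a ∈ M.H k
  | M, k, .and φ ψ => sat M k φ ∧ sat M k ψ
  | M, k, .or φ ψ => sat M k φ ∨ sat M k ψ
  | M, k, .imp φ ψ =>
      (sat M k φ → sat M k ψ) ∧ (sat M.tot k φ → sat M.tot k ψ)
  | M, k, .prev I φ =>
      0 < k ∧ sat M (k - 1) φ ∧ memI I (M.tau k - M.tau (k - 1))
  | M, k, .wprev I φ =>
      k = 0 ∨ sat M (k - 1) φ ∨ ¬ memI I (M.tau k - M.tau (k - 1))
  | M, k, .next I φ =>
      ((k + 1 : ℕ) : ℕ∞) < M.lam ∧ sat M (k + 1) φ ∧ memI I (M.tau (k + 1) - M.tau k)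
  | M, k, .wnext I φ =>
      ((k + 1 : ℕ) : ℕ∞) = M.lam ∨ sat M (k + 1) φ ∨ ¬ memI I (M.tau (k + 1) - M.tau k)
  | M, k, .since I φ ψ =>
      ∃ j : ℕ, j ≤ k ∧ memI I (M.tau k - M.tau j) ∧ sat M j ψ ∧
        ∀ i : ℕ, j < i → i ≤ k → sat M i φ
  | M, k, .trigger I φ ψ =>
      ∀ j : ℕ, j ≤ k → memI I (M.tau k - M.tau j) →
        sat M j ψ ∨ ∃ i : ℕ, j < i ∧ i ≤ k ∧ sat M i φ
  | M, k, .until_ I φ ψ =>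
      ∃ j : ℕ, k ≤ j ∧ ((j : ℕ) : ℕ∞) < M.lam ∧ memI I (M.tau j - M.tau k) ∧ sat M j ψ ∧
        ∀ i : ℕ, k ≤ i → i < j → sat M i φ
  | M, k, .release I φ ψ =>
      ∀ j : ℕ, k ≤ j → ((j : ℕ) : ℕ∞) < M.lam → memI I (M.tau j - M.tau k) →
        sat M j ψ ∨ ∃ i : ℕ, k ≤ i ∧ i < j ∧ sat M i φ

/-- The three-valued (Gödel) valuation associated with a timed HT-trace:
`0` (false), `1` (true there only), `2` (true here).  `sSup ∅ = 0` in `ℕ`, and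
the `insert 2` realizes `inf ∅ = 2` (all values are `≤ 2`). -/
noncomputable def mval {A : Type} (M : TimedTrace A) : MF A → ℕ → ℕ
  | .bot, _ => 0
  | .atom a, k => if a ∈ M.H k then 2 else if a ∈ M.T k then 1 else 0
  | .and φ ψ, k => min (mval M φ k) (mval M ψ k)
  | .or φ ψ, k => max (mval M φ k) (mval M ψ k)
  | .imp φ ψ, k => if mval M φ k ≤ mval M ψ k then 2 else mval M ψ k
  | .prev I φ, k =>
      if 0 < k ∧ memI I (M.tau k - M.tau (k - 1)) then mval M φ (k - 1) else 0
  | .wprev I φ, k =>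
      if k = 0 ∨ ¬ memI I (M.tau k - M.tau (k - 1)) then 2 else mval M φ (k - 1)
  | .next I φ, k =>
      if ((k + 1 : ℕ) : ℕ∞) < M.lam ∧ memI I (M.tau (k + 1) - M.tau k) then
        mval M φ (k + 1) else 0
  | .wnext I φ, k =>
      if ((k + 1 : ℕ) : ℕ∞) = M.lam ∨ ¬ memI I (M.tau (k + 1) - M.tau k) then 2
      else mval M φ (k + 1)
  | .since I φ ψ, k =>
      sSup {v : ℕ | ∃ j : ℕ, j ≤ k ∧ memI I (M.tau k - M.tau j) ∧
        v = min (mval M ψ j)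
          (sInf (insert 2 {w : ℕ | ∃ i : ℕ, j < i ∧ i ≤ k ∧ w = mval M φ i}))}
  | .trigger I φ ψ, k =>
      sInf (insert 2 {v : ℕ | ∃ j : ℕ, j ≤ k ∧ memI I (M.tau k - M.tau j) ∧
        v = max (mval M ψ j)
          (sSup {w : ℕ | ∃ i : ℕ, j < i ∧ i ≤ k ∧ w = mval M φ i})})
  | .until_ I φ ψ, k =>
      sSup {v : ℕ | ∃ j : ℕ, k ≤ j ∧ ((j : ℕ) : ℕ∞) < M.lam ∧
        memI I (M.tau j - M.tau k) ∧
        v = min (mval M ψ j)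
          (sInf (insert 2 {w : ℕ | ∃ i : ℕ, k ≤ i ∧ i < j ∧ w = mval M φ i}))}
  | .release I φ ψ, k =>
      sInf (insert 2 {v : ℕ | ∃ j : ℕ, k ≤ j ∧ ((j : ℕ) : ℕ∞) < M.lam ∧
        memI I (M.tau j - M.tau k) ∧
        v = max (mval M ψ j)
          (sSup {w : ℕ | ∃ i : ℕ, k ≤ i ∧ i < j ∧ w = mval M φ i})})


lemma sInf_insert_two_le (S : Set ℕ) : sInf (insert 2 S) ≤ 2 :=
  Nat.sInf_le (Set.mem_insert _ _)

lemma mval_le_two {A : Type} (M : TimedTrace A) : ∀ (φ : MF A) (k : ℕ), mval M φ k ≤ 2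
  | .bot, _ => by simp [mval]
  | .atom a, k => by simp only [mval]; split_ifs <;> omega
  | .and φ ψ, k => le_trans (min_le_left _ _) (mval_le_two M φ k)
  | .or φ ψ, k => max_le (mval_le_two M φ k) (mval_le_two M ψ k)
  | .imp φ ψ, k => by
      simp only [mval]; split_ifs
      · exact le_refl _
      · exact mval_le_two M ψ k
  | .prev I φ, k => by
      simp only [mval]; split_ifs
      · exact mval_le_two M φ (k - 1)
      · omega
  | .wprev I φ, k => by
      simp only [mval]; split_ifs
      · exact le_refl _
      · exact mval_le_two M φ (k - 1)
  | .next I φ, k => by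
      simp only [mval]; split_ifs
      · exact mval_le_two M φ (k + 1)
      · omega
  | .wnext I φ, k => by
      simp only [mval]; split_ifs
      · exact le_refl _
      · exact mval_le_two M φ (k + 1)
  | .since I φ ψ, k => by
      simp only [mval]
      refine csSup_le' ?_
      rintro v ⟨j, -, -, rfl⟩
      exact le_trans (min_le_left _ _) (mval_le_two M ψ j)
  | .trigger I φ ψ, k => sInf_insert_two_le _
  | .until_ I φ ψ, k => by
      simp only [mval]
      refine csSup_le' ?_
      rintro v ⟨j, -, -, -, rfl⟩
      exact le_trans (min_le_left _ _) (mval_le_two M ψ j)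
  | .release I φ ψ, k => sInf_insert_two_le _

lemma nat_sSup_insert (a : ℕ) (S : Set ℕ) (hS : BddAbove S) :
    sSup (insert a S) = max a (sSup S) := by
  rcases S.eq_empty_or_nonempty with rfl | h
  · simp [csSup_empty]
  · exact csSup_insert hS h

lemma nat_sInf_insert (a : ℕ) (S : Set ℕ) (h : S.Nonempty) :
    sInf (insert a S) = min a (sInf S) := csInf_insert (OrderBot.bddBelow S) h

lemma sInf_insert_two_image_max {b : ℕ} (hb : b ≤ 2) (V : Set ℕ) :
    sInf (insert 2 ((fun v => max b v) '' V)) = max b (sInf (insert 2 V)) := by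
  have himg : insert 2 ((fun v => max b v) '' V) = (fun v => max b v) '' insert 2 V := by
    rw [Set.image_insert_eq, max_eq_right hb]
  rw [himg]
  have hne : (insert 2 V).Nonempty := ⟨2, Set.mem_insert _ _⟩
  have hm : sInf (insert 2 V) ∈ insert 2 V := Nat.sInf_mem hne
  apply le_antisymm
  · exact Nat.sInf_le ⟨_, hm, rfl⟩
  · refine le_csInf (hne.image _) ?_
    rintro x ⟨s, hs, rfl⟩
    exact max_le_max le_rfl (Nat.sInf_le hs)

lemma tau_le_of_le {A : Type} (M : TimedTrace A) :
    ∀ {i j : ℕ}, i ≤ j → ((j : ℕ) : ℕ∞) < M.lam → M.tau i ≤ M.tau j := by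
  intro i j hij hj
  induction j with
  | zero =>
      have : i = 0 := Nat.le_zero.mp hij
      simp [this]
  | succ j ih =>
      rcases Nat.lt_or_ge i (j + 1) with h | h
      · have hj' : ((j : ℕ) : ℕ∞) < M.lam :=
          lt_trans (by exact_mod_cast Nat.lt_succ_self j) hj
        exact le_trans (ih (Nat.lt_succ_iff.mp h) hj') (M.mono j hj)
      · have : i = j + 1 := le_antisymm hij h
        simp [this]


/-- three-valued recursive identity for metric release over
strict traces; the min over `x ∈ [1,n]` is taken with `sInf (insert 2 ·)`
(empty min `= 2`; all values are `≤ 2`). -/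
theorem mval_release_unfolding {A : Type} (M : TimedTrace A) (hstrict : M.strict)
    (k : ℕ) (hk : (k : ℕ∞) < M.lam) (n : ℕ) (φ ψ : MF A) :
    mval M (MF.release (0, (n : ℕ∞)) φ ψ) k =
      min (mval M ψ k) (max (mval M φ k)
        (sInf (insert 2 ((fun x : ℕ =>
          mval M (MF.wnext (x, (x : ℕ∞)) (MF.release (0, ((n - x : ℕ) : ℕ∞)) φ ψ)) k) ''
            Set.Icc 1 n)))) := by
  have hle2 := mval_le_two M
  have hrel : ∀ (m k' : ℕ), mval M (MF.release (0, (m : ℕ∞)) φ ψ) k' =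
      sInf (insert 2 {v : ℕ | ∃ j : ℕ, k' ≤ j ∧ ((j : ℕ) : ℕ∞) < M.lam ∧
        M.tau j - M.tau k' ≤ m ∧
        v = max (mval M ψ j)
          (sSup {w : ℕ | ∃ i : ℕ, k' ≤ i ∧ i < j ∧ w = mval M φ i})}) := by
    intro m k'
    simp only [mval, memI]
    congr 2
    ext v
    constructor
    · rintro ⟨j, h1, h2, ⟨-, h3⟩, h4⟩
      exact ⟨j, h1, h2, by exact_mod_cast h3, h4⟩
    · rintro ⟨j, h1, h2, h3, h4⟩
      exact ⟨j, h1, h2, ⟨Nat.zero_le _, by exact_mod_cast h3⟩, h4⟩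
  have hGk : ∀ k' : ℕ,
      max (mval M ψ k') (sSup {w : ℕ | ∃ i : ℕ, k' ≤ i ∧ i < k' ∧ w = mval M φ i})
        = mval M ψ k' := by
    intro k'
    have hempty : {w : ℕ | ∃ i : ℕ, k' ≤ i ∧ i < k' ∧ w = mval M φ i} = ∅ := by
      ext w
      simp only [Set.mem_setOf_eq, Set.mem_empty_iff_false, iff_false]
      rintro ⟨i, h1, h2, -⟩
      omega
    rw [hempty, csSup_empty]
    simp
  have hwnext : ∀ (J : Ivl) (χ : MF A) (k' : ℕ), mval M (MF.wnext J χ) k' =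
      if ((k' + 1 : ℕ) : ℕ∞) = M.lam ∨ ¬ memI J (M.tau (k' + 1) - M.tau k') then 2
      else mval M χ (k' + 1) := by
    intro J χ k'
    simp only [mval]
  rw [hrel n k]
  by_cases hk1 : ((k + 1 : ℕ) : ℕ∞) < M.lam
  · -- k+1 is still in the domain
    have hstep : M.tau k < M.tau (k + 1) := hstrict k hk1
    by_cases hnD : n < M.tau (k + 1) - M.tau k
    · -- the next time point is already out of the interval
      have hset : {v : ℕ | ∃ j : ℕ, k ≤ j ∧ ((j : ℕ) : ℕ∞) < M.lam ∧
          M.tau j - M.tau k ≤ n ∧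
          v = max (mval M ψ j)
            (sSup {w : ℕ | ∃ i : ℕ, k ≤ i ∧ i < j ∧ w = mval M φ i})}
          = {mval M ψ k} := by
        ext v
        simp only [Set.mem_setOf_eq, Set.mem_singleton_iff]
        constructor
        · rintro ⟨j, hkj, hjlam, hcond, rfl⟩
          have hjk : j = k := by
            by_contra hne
            have h1 : k + 1 ≤ j := by omega
            have h2 : M.tau (k + 1) ≤ M.tau j := tau_le_of_le M h1 hjlam
            omega
          rw [hjk]
          exact hGk k
        · rintro rfl
          exact ⟨k, le_rfl, hk, by simp, (hGk k).symm⟩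
      have himg : (fun x : ℕ =>
          mval M (MF.wnext (x, (x : ℕ∞)) (MF.release (0, ((n - x : ℕ) : ℕ∞)) φ ψ)) k) ''
            Set.Icc 1 n ⊆ {2} := by
        rintro v ⟨x, hx, rfl⟩
        simp only [Set.mem_singleton_iff]
        rw [hwnext, if_pos]
        right
        rintro ⟨hm1, hm2⟩
        have hm2' : ((M.tau (k + 1) - M.tau k : ℕ) : ℕ∞) ≤ (x : ℕ∞) := hm2
        have hm2'' : M.tau (k + 1) - M.tau k ≤ x := by exact_mod_cast hm2'
        simp only [Set.mem_Icc] at hx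
        omega
      have h2img : insert 2 ((fun x : ℕ =>
          mval M (MF.wnext (x, (x : ℕ∞)) (MF.release (0, ((n - x : ℕ) : ℕ∞)) φ ψ)) k) ''
            Set.Icc 1 n) = {2} := by
        apply Set.Subset.antisymm
        · exact Set.insert_subset_iff.mpr ⟨rfl, himg⟩
        · intro x hx
          rw [Set.mem_singleton_iff] at hx
          exact hx ▸ Set.mem_insert _ _
      rw [hset, h2img, nat_sInf_insert 2 {mval M ψ k} (Set.singleton_nonempty _), csInf_singleton, csInf_singleton]
      have h1 := hle2 ψ k
      have h2 := hle2 φ k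
      omega
    · -- the next time point lies in the interval: D ≤ n
      push_neg at hnD
      have hD1 : 1 ≤ M.tau (k + 1) - M.tau k := by omega
      set D := M.tau (k + 1) - M.tau k with hDdef
      set c := mval M (MF.release (0, ((n - D : ℕ) : ℕ∞)) φ ψ) (k + 1) with hcdef
      -- compute the inner inf on the right-hand side
      have h2img : insert 2 ((fun x : ℕ =>
          mval M (MF.wnext (x, (x : ℕ∞)) (MF.release (0, ((n - x : ℕ) : ℕ∞)) φ ψ)) k) ''
            Set.Icc 1 n) = insert 2 {c} := by
        ext v
        simp only [Set.mem_insert_iff, Set.mem_singleton_iff, Set.mem_image, Set.mem_Icc]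
        constructor
        · rintro (rfl | ⟨x, hx, rfl⟩)
          · exact Or.inl rfl
          · by_cases hxD : x = D
            · subst hxD
              right
              rw [hwnext, if_neg (by
                push_neg
                exact ⟨ne_of_lt hk1, hDdef.le,
                  (by exact_mod_cast hDdef.ge :
                    ((M.tau (k + 1) - M.tau k : ℕ) : ℕ∞) ≤ (D : ℕ∞))⟩)]
            · left
              have hcond : ¬ memI (x, (x : ℕ∞)) (M.tau (k + 1) - M.tau k) := by
                rintro ⟨hm1, hm2⟩
                have hm2' : ((M.tau (k + 1) - M.tau k : ℕ) : ℕ∞) ≤ (x : ℕ∞) := hm2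
                have hm2'' : M.tau (k + 1) - M.tau k ≤ x := by exact_mod_cast hm2'
                omega
              rw [hwnext, if_pos (Or.inr hcond)]
        · rintro (rfl | rfl)
          · exact Or.inl rfl
          · right
            refine ⟨D, ⟨hD1, hnD⟩, ?_⟩
            rw [hwnext, if_neg (by
              push_neg
              exact ⟨ne_of_lt hk1, hDdef.le,
                (by exact_mod_cast hDdef.ge :
                  ((M.tau (k + 1) - M.tau k : ℕ) : ℕ∞) ≤ (D : ℕ∞))⟩)]
      -- decompose the left-hand set
      have hset : insert 2 {v : ℕ | ∃ j : ℕ, k ≤ j ∧ ((j : ℕ) : ℕ∞) < M.lam ∧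
          M.tau j - M.tau k ≤ n ∧
          v = max (mval M ψ j)
            (sSup {w : ℕ | ∃ i : ℕ, k ≤ i ∧ i < j ∧ w = mval M φ i})}
          = insert 2 (insert (mval M ψ k) ((fun v => max (mval M φ k) v) ''
              {v : ℕ | ∃ j : ℕ, k + 1 ≤ j ∧ ((j : ℕ) : ℕ∞) < M.lam ∧
                M.tau j - M.tau (k + 1) ≤ n - D ∧
                v = max (mval M ψ j)
                  (sSup {w : ℕ | ∃ i : ℕ, k + 1 ≤ i ∧ i < j ∧ w = mval M φ i})})) := by
        have hS1 : ∀ j : ℕ, k + 1 ≤ j →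
            {w : ℕ | ∃ i : ℕ, k ≤ i ∧ i < j ∧ w = mval M φ i}
              = insert (mval M φ k) {w : ℕ | ∃ i : ℕ, k + 1 ≤ i ∧ i < j ∧ w = mval M φ i} := by
          intro j hj
          ext w
          simp only [Set.mem_setOf_eq, Set.mem_insert_iff]
          constructor
          · rintro ⟨i, h1, h2, rfl⟩
            by_cases hik : i = k
            · subst hik; exact Or.inl rfl
            · exact Or.inr ⟨i, by omega, h2, rfl⟩
          · rintro (rfl | ⟨i, h1, h2, rfl⟩)
            · exact ⟨k, le_rfl, by omega, rfl⟩
            · exact ⟨i, by omega, h2, rfl⟩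
        have hbdd : ∀ j : ℕ,
            BddAbove {w : ℕ | ∃ i : ℕ, k + 1 ≤ i ∧ i < j ∧ w = mval M φ i} := by
          intro j
          refine ⟨2, ?_⟩
          rintro w ⟨i, -, -, rfl⟩
          exact hle2 φ i
        ext v
        simp only [Set.mem_insert_iff, Set.mem_setOf_eq, Set.mem_image]
        constructor
        · rintro (rfl | ⟨j, hkj, hjlam, hcond, rfl⟩)
          · exact Or.inl rfl
          · by_cases hjk : j = k
            · rw [hjk]
              exact Or.inr (Or.inl (hGk k))
            · right; right
              have hj1 : k + 1 ≤ j := by omega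
              have htj : M.tau (k + 1) ≤ M.tau j := tau_le_of_le M hj1 hjlam
              refine ⟨max (mval M ψ j)
                (sSup {w : ℕ | ∃ i : ℕ, k + 1 ≤ i ∧ i < j ∧ w = mval M φ i}),
                ⟨j, hj1, hjlam, by omega, rfl⟩, ?_⟩
              rw [hS1 j hj1, nat_sSup_insert _ _ (hbdd j), max_left_comm]
        · rintro (rfl | h | ⟨v', ⟨j, hj1, hjlam, hcond, rfl⟩, rfl⟩)
          · exact Or.inl rfl
          · exact Or.inr ⟨k, le_rfl, hk, by simp, h.trans (hGk k).symm⟩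
          · right
            have htj : M.tau (k + 1) ≤ M.tau j := tau_le_of_le M hj1 hjlam
            refine ⟨j, by omega, hjlam, by omega, ?_⟩
            rw [hS1 j hj1, nat_sSup_insert _ _ (hbdd j), max_left_comm]
      rw [hset, Set.insert_comm,
        nat_sInf_insert _ _ ⟨2, Set.mem_insert _ _⟩,
        sInf_insert_two_image_max (hle2 φ k), ← hrel (n - D) (k + 1), ← hcdef,
        h2img, nat_sInf_insert 2 {c} (Set.singleton_nonempty _), csInf_singleton]
      have h1 := hle2 (MF.release (0, ((n - D : ℕ) : ℕ∞)) φ ψ) (k + 1)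
      rw [← hcdef] at h1
      omega
  · -- k+1 = λ : the trace ends right after k
    have hlam : ((k + 1 : ℕ) : ℕ∞) = M.lam := by
      have h1 : M.lam ≤ ((k + 1 : ℕ) : ℕ∞) := not_lt.mp hk1
      have h2 : ((k : ℕ) : ℕ∞) + 1 ≤ M.lam := Order.add_one_le_of_lt hk
      have h3 : ((k + 1 : ℕ) : ℕ∞) = ((k : ℕ) : ℕ∞) + 1 := by push_cast; ring
      exact le_antisymm (h3 ▸ h2) h1
    have hset : {v : ℕ | ∃ j : ℕ, k ≤ j ∧ ((j : ℕ) : ℕ∞) < M.lam ∧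
        M.tau j - M.tau k ≤ n ∧
        v = max (mval M ψ j)
          (sSup {w : ℕ | ∃ i : ℕ, k ≤ i ∧ i < j ∧ w = mval M φ i})}
        = {mval M ψ k} := by
      ext v
      simp only [Set.mem_setOf_eq, Set.mem_singleton_iff]
      constructor
      · rintro ⟨j, hkj, hjlam, -, rfl⟩
        have hjk : j = k := by
          by_contra hne
          have h1 : k + 1 ≤ j := by omega
          have h2 : ((k + 1 : ℕ) : ℕ∞) ≤ ((j : ℕ) : ℕ∞) := Nat.cast_le.mpr h1
          exact absurd (lt_of_le_of_lt h2 hjlam) (hlam ▸ lt_irrefl _)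
        rw [hjk]
        exact hGk k
      · rintro rfl
        exact ⟨k, le_rfl, hk, by simp, (hGk k).symm⟩
    have himg : (fun x : ℕ =>
        mval M (MF.wnext (x, (x : ℕ∞)) (MF.release (0, ((n - x : ℕ) : ℕ∞)) φ ψ)) k) ''
          Set.Icc 1 n ⊆ {2} := by
      rintro v ⟨x, hx, rfl⟩
      simp only [Set.mem_singleton_iff]
      rw [hwnext, if_pos (Or.inl hlam)]
    have h2img : insert 2 ((fun x : ℕ =>
        mval M (MF.wnext (x, (x : ℕ∞)) (MF.release (0, ((n - x : ℕ) : ℕ∞)) φ ψ)) k) ''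
          Set.Icc 1 n) = {2} := by
      apply Set.Subset.antisymm
      · exact Set.insert_subset_iff.mpr ⟨rfl, himg⟩
      · intro x hx
        rw [Set.mem_singleton_iff] at hx
        exact hx ▸ Set.mem_insert _ _
    rw [hset, h2img, nat_sInf_insert 2 {mval M ψ k} (Set.singleton_nonempty _), csInf_singleton, csInf_singleton]
    have h1 := hle2 ψ k
    have h2 := hle2 φ k
    omega
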